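/- There is a well-defined monoid homomorphism from the pseudo braid monoid PM_n to the monoid ring Z[B_n] of the braid group, sending σ_i^{±1} to σ_i^{±1} and p_i to σ_i + σ_i^{-1}. -/

import Mathlib

/-- Generators of the pseudo braid monoid `PM_n`: `σ_i`, `σ_i⁻¹` and `p_i`
for `i = 1, …, n-1` (indexed by `Fin (n-1)`). -/
inductive PMGen (n : ℕ) : Type
  | s  : Fin (n - 1) → PMGen n   -- σ_i
  | si : Fin (n - 1) → PMGen n   -- σ_i⁻¹
  | p  : Fin (n - 1) → PMGen n   -- the pseudo (pre-crossing) generator p_i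

open FreeMonoid in
/-- The defining relations of the pseudo braid monoid `PM_n`. -/
inductive pmRel (n : ℕ) : FreeMonoid (PMGen n) → FreeMonoid (PMGen n) → Prop
  | braid_far (i j : Fin (n - 1)) (h : i.val + 2 ≤ j.val) :
      pmRel n (of (.s i) * of (.s j)) (of (.s j) * of (.s i))
  | braid (i j : Fin (n - 1)) (h : j.val = i.val + 1) :
      pmRel n (of (.s i) * of (.s j) * of (.s i)) (of (.s j) * of (.s i) * of (.s j))
  | inv_right (i : Fin (n - 1)) : pmRel n (of (.s i) * of (.si i)) 1
  | inv_left (i : Fin (n - 1)) : pmRel n (of (.si i) * of (.s i)) 1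
  | pp (i j : Fin (n - 1)) (h : i.val + 2 ≤ j.val) :
      pmRel n (of (.p i) * of (.p j)) (of (.p j) * of (.p i))
  | ps_far (i j : Fin (n - 1)) (h : i.val + 2 ≤ j.val ∨ j.val + 2 ≤ i.val) :
      pmRel n (of (.p i) * of (.s j)) (of (.s j) * of (.p i))
  | psi_far (i j : Fin (n - 1)) (h : i.val + 2 ≤ j.val ∨ j.val + 2 ≤ i.val) :
      pmRel n (of (.p i) * of (.si j)) (of (.si j) * of (.p i))
  | ps (i : Fin (n - 1)) : pmRel n (of (.p i) * of (.s i)) (of (.s i) * of (.p i))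
  | psi (i : Fin (n - 1)) : pmRel n (of (.p i) * of (.si i)) (of (.si i) * of (.p i))
  | ssp (i j : Fin (n - 1)) (h : j.val = i.val + 1) :
      pmRel n (of (.s i) * of (.s j) * of (.p i)) (of (.p j) * of (.s i) * of (.s j))
  | ssp' (i j : Fin (n - 1)) (h : j.val = i.val + 1) :
      pmRel n (of (.s j) * of (.s i) * of (.p j)) (of (.p i) * of (.s j) * of (.s i))

/-- The pseudo braid monoid `PM_n`, presented by generators `σ_i^{±1}, p_i` and the pseudo
braid relations. -/
abbrev PM (n : ℕ) : Type := PresentedMonoid (pmRel n)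

/-- The braid relations, as elements `lhs * rhs⁻¹` of the free group on the Artin
generators `σ_1, …, σ_{n-1}`. -/
def braidRels (n : ℕ) : Set (FreeGroup (Fin (n - 1))) :=
  {r | (∃ i j : Fin (n - 1), i.val + 2 ≤ j.val ∧
          r = FreeGroup.of i * FreeGroup.of j * (FreeGroup.of j * FreeGroup.of i)⁻¹) ∨
       (∃ i j : Fin (n - 1), j.val = i.val + 1 ∧
          r = FreeGroup.of i * FreeGroup.of j * FreeGroup.of i *
              (FreeGroup.of j * FreeGroup.of i * FreeGroup.of j)⁻¹)}

/-- The Artin braid group `B_n` on `n` strands. -/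
abbrev BraidGroup (n : ℕ) : Type := PresentedGroup (braidRels n)

section Aux

private lemma mk_rel_one {α : Type*} (rels : Set (FreeGroup α)) {r : FreeGroup α} (h : r ∈ rels) :
    PresentedGroup.mk rels r = 1 :=
  (QuotientGroup.eq_one_iff r).mpr (Subgroup.subset_normalClosure h)

private lemma braid_far_grp {n : ℕ} (i j : Fin (n - 1)) (h : i.val + 2 ≤ j.val) :
    (PresentedGroup.of i : BraidGroup n) * PresentedGroup.of j =
      PresentedGroup.of j * PresentedGroup.of i := by
  have h1 := mk_rel_one (braidRels n) (Or.inl ⟨i, j, h, rfl⟩)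
  rw [map_mul, map_inv, mul_inv_eq_one, map_mul, map_mul] at h1
  exact h1

private lemma braid_grp {n : ℕ} (i j : Fin (n - 1)) (h : j.val = i.val + 1) :
    (PresentedGroup.of i : BraidGroup n) * PresentedGroup.of j * PresentedGroup.of i =
      PresentedGroup.of j * PresentedGroup.of i * PresentedGroup.of j := by
  have h1 := mk_rel_one (braidRels n) (Or.inr ⟨i, j, h, rfl⟩)
  rw [map_mul, map_inv, mul_inv_eq_one, map_mul, map_mul, map_mul, map_mul] at h1
  exact h1

private lemma comm_grp {n : ℕ} (i j : Fin (n - 1))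
    (h : i.val + 2 ≤ j.val ∨ j.val + 2 ≤ i.val) :
    Commute (PresentedGroup.of i : BraidGroup n) (PresentedGroup.of j) := by
  rcases h with h | h
  · exact braid_far_grp i j h
  · exact (braid_far_grp j i h).symm

private lemma conj_grp {n : ℕ} (i j : Fin (n - 1)) (h : j.val = i.val + 1) :
    (PresentedGroup.of i : BraidGroup n) * PresentedGroup.of j * (PresentedGroup.of i)⁻¹ =
      (PresentedGroup.of j)⁻¹ * PresentedGroup.of i * PresentedGroup.of j := by
  set a := (PresentedGroup.of i : BraidGroup n)
  set b := (PresentedGroup.of j : BraidGroup n)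
  have hb : a * b * a = b * a * b := braid_grp i j h
  calc a * b * a⁻¹ = b⁻¹ * (b * a * b) * a⁻¹ := by group
    _ = b⁻¹ * (a * b * a) * a⁻¹ := by rw [hb]
    _ = b⁻¹ * a * b := by group

private lemma conj_grp' {n : ℕ} (i j : Fin (n - 1)) (h : j.val = i.val + 1) :
    (PresentedGroup.of j : BraidGroup n) * PresentedGroup.of i * (PresentedGroup.of j)⁻¹ =
      (PresentedGroup.of i)⁻¹ * PresentedGroup.of j * PresentedGroup.of i := by
  set a := (PresentedGroup.of i : BraidGroup n)
  set b := (PresentedGroup.of j : BraidGroup n)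
  have hb : a * b * a = b * a * b := braid_grp i j h
  calc b * a * b⁻¹ = a⁻¹ * (a * b * a) * b⁻¹ := by group
    _ = a⁻¹ * (b * a * b) * b⁻¹ := by rw [hb]
    _ = a⁻¹ * b * a := by group

end Aux

/-- There is a well-defined monoid homomorphism from the pseudo braid monoid `PM_n` to the
monoid ring `ℤ[B_n]` of the braid group (regarded as a monoid under multiplication), sending
`σ_i ↦ σ_i`, `σ_i⁻¹ ↦ σ_i⁻¹` and `p_i ↦ σ_i + σ_i⁻¹`. -/
theorem pm_to_monoid_ring_of_braid_group (n : ℕ) :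
    ∃ f : PM n →* MonoidAlgebra ℤ (BraidGroup n),
      (∀ i, f (PresentedMonoid.of (pmRel n) (.s i)) =
        MonoidAlgebra.of ℤ (BraidGroup n) (PresentedGroup.of i)) ∧
      (∀ i, f (PresentedMonoid.of (pmRel n) (.si i)) =
        MonoidAlgebra.of ℤ (BraidGroup n) (PresentedGroup.of i)⁻¹) ∧
      (∀ i, f (PresentedMonoid.of (pmRel n) (.p i)) =
        MonoidAlgebra.of ℤ (BraidGroup n) (PresentedGroup.of i) +
          MonoidAlgebra.of ℤ (BraidGroup n) (PresentedGroup.of i)⁻¹) := by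
  set T : BraidGroup n →* MonoidAlgebra ℤ (BraidGroup n) := MonoidAlgebra.of ℤ (BraidGroup n)
    with hT
  set S : Fin (n - 1) → BraidGroup n := PresentedGroup.of with hS
  set g : PMGen n → MonoidAlgebra ℤ (BraidGroup n) := fun x =>
    match x with
    | .s i => T (S i)
    | .si i => T (S i)⁻¹
    | .p i => T (S i) + T (S i)⁻¹
    with hg
  have key : ∀ a b : FreeMonoid (PMGen n), pmRel n a b →
      FreeMonoid.lift g a = FreeMonoid.lift g b := by
    intro a b hrel
    induction hrel with
    | braid_far i j h =>
        simp only [map_mul, FreeMonoid.lift_eval_of]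
        rw [← map_mul, ← map_mul, braid_far_grp i j h]
    | braid i j h =>
        simp only [map_mul, FreeMonoid.lift_eval_of]
        rw [← map_mul, ← map_mul, ← map_mul, ← map_mul, braid_grp i j h]
    | inv_right i =>
        simp only [map_mul, FreeMonoid.lift_eval_of]
        rw [← map_mul, mul_inv_cancel, map_one, map_one]
    | inv_left i =>
        simp only [map_mul, FreeMonoid.lift_eval_of]
        rw [← map_mul, inv_mul_cancel, map_one, map_one]
    | pp i j h =>
        simp only [map_mul, FreeMonoid.lift_eval_of]
        have c : Commute (S i) (S j) := comm_grp i j (Or.inl h)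
        exact (((c.map T).add_left (c.inv_left.map T)).add_right
          ((c.inv_right.map T).add_left (c.inv_inv.map T))).eq
    | ps_far i j h =>
        simp only [map_mul, FreeMonoid.lift_eval_of]
        have c : Commute (S i) (S j) := comm_grp i j h
        exact ((c.map T).add_left (c.inv_left.map T)).eq
    | psi_far i j h =>
        simp only [map_mul, FreeMonoid.lift_eval_of]
        have c : Commute (S i) (S j) := comm_grp i j h
        exact ((c.inv_right.map T).add_left (c.inv_inv.map T)).eq
    | ps i =>
        simp only [map_mul, FreeMonoid.lift_eval_of]
        have c : Commute (S i) (S i) := Commute.refl _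
        exact ((c.map T).add_left (c.inv_left.map T)).eq
    | psi i =>
        simp only [map_mul, FreeMonoid.lift_eval_of]
        have c : Commute (S i) (S i) := Commute.refl _
        exact ((c.inv_right.map T).add_left (c.inv_inv.map T)).eq
    | ssp i j h =>
        simp only [map_mul, FreeMonoid.lift_eval_of]
        rw [mul_add, add_mul, add_mul, ← map_mul, ← map_mul, ← map_mul, ← map_mul, ← map_mul,
          ← map_mul, ← map_mul, braid_grp i j h, conj_grp i j h]
    | ssp' i j h =>
        simp only [map_mul, FreeMonoid.lift_eval_of]
        rw [mul_add, add_mul, add_mul, ← map_mul, ← map_mul, ← map_mul, ← map_mul, ← map_mul,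
          ← map_mul, ← map_mul, conj_grp' i j h, ← braid_grp i j h]
  refine ⟨PresentedMonoid.lift g key, fun i => ?_, fun i => ?_, fun i => ?_⟩ <;>
    simp [PresentedMonoid.lift_of] <;> rfl
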